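/- The function Ai is entire (complex differentiable on all of ℂ) and satisfies the Airy differential equation Ai″(z) = z·Ai(z) for every z ∈ ℂ; likewise Bi is entire and satisfies Bi″(z) = z·Bi(z) for every z ∈ ℂ. -/

import Mathlib

open Complex

/-- The Airy function `Ai`, defined by its power series. -/
noncomputable def Ai (z : ℂ) : ℂ :=
  (3 : ℂ) ^ (-(2 : ℂ) / 3) *
      ∑' n : ℕ, z ^ (3 * n) / ((9 : ℂ) ^ n * (Nat.factorial n : ℂ) * Complex.Gamma ((n : ℂ) + 2 / 3)) -
    (3 : ℂ) ^ (-(4 : ℂ) / 3) *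
      ∑' n : ℕ, z ^ (3 * n + 1) / ((9 : ℂ) ^ n * (Nat.factorial n : ℂ) * Complex.Gamma ((n : ℂ) + 4 / 3))

/-- The Airy function `Bi`, defined by its power series. -/
noncomputable def Bi (z : ℂ) : ℂ :=
  (3 : ℂ) ^ (-(1 : ℂ) / 6) *
      ∑' n : ℕ, z ^ (3 * n) / ((9 : ℂ) ^ n * (Nat.factorial n : ℂ) * Complex.Gamma ((n : ℂ) + 2 / 3)) +
    (3 : ℂ) ^ (-(5 : ℂ) / 6) *
      ∑' n : ℕ, z ^ (3 * n + 1) / ((9 : ℂ) ^ n * (Nat.factorial n : ℂ) * Complex.Gamma ((n : ℂ) + 4 / 3))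

/-!
`Ai` and `Bi` are linear combinations of the two lacunary series `∑ bₙ z^(3n+j)` with
`bₙ = 1 / (9ⁿ n! Γ(n + c))` and `(j, c) = (0, 2/3)` or `(1, 4/3)`. The functional equation
`Γ(s + 1) = s Γ(s)` turns into the recurrence `(3n+j+3)(3n+j+2) bₙ₊₁ = bₙ`. On the one hand it
gives `‖bₙ‖ ≤ ‖b₀‖ / n!`, so both series converge absolutely and locally uniformly on `ℂ` and can
be differentiated termwise; on the other hand it says exactly that differentiating such a series
twice multiplies it by `z`.
-/

section PowerSeries

variable {u : ℕ → ℂ} {k : ℕ → ℕ}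

lemma norm_mul_pow_le_of_norm_le {R : ℝ} {w : ℂ} (hw : ‖w‖ ≤ R) (n : ℕ) :
    ‖u n * w ^ k n‖ ≤ ‖u n‖ * R ^ k n := by
  rw [norm_mul, norm_pow]
  gcongr

lemma differentiable_tsum_mul_pow (hu : ∀ R, 0 ≤ R → Summable fun n => ‖u n‖ * R ^ k n) :
    Differentiable ℂ fun w => ∑' n, u n * w ^ k n := by
  intro z
  have hz : z ∈ Metric.ball (0 : ℂ) (‖z‖ + 1) := by simp
  refine (Complex.differentiableOn_tsum_of_summable_norm (hu (‖z‖ + 1) (by positivity))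
    (fun n => by fun_prop) Metric.isOpen_ball
    (fun n w hw => norm_mul_pow_le_of_norm_le ?_ n)).differentiableAt
    (Metric.isOpen_ball.mem_nhds hz)
  simpa using (Metric.mem_ball.mp hw).le

lemma deriv_tsum_mul_pow (hu : ∀ R, 0 ≤ R → Summable fun n => ‖u n‖ * R ^ k n) :
    deriv (fun w => ∑' n, u n * w ^ k n) = fun w => ∑' n, u n * k n * w ^ (k n - 1) := by
  funext z
  have hz : z ∈ Metric.ball (0 : ℂ) (‖z‖ + 1) := by simp
  refine (Complex.hasSum_deriv_of_summable_norm (hu (‖z‖ + 1) (by positivity))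
    (fun n => by fun_prop) Metric.isOpen_ball
    (fun n w hw => norm_mul_pow_le_of_norm_le ?_ n) hz).tsum_eq.symm.trans ?_
  · simpa using (Metric.mem_ball.mp hw).le
  · simp [mul_assoc]

lemma summable_norm_mul_natCast_mul_pow (hu : ∀ R, 0 ≤ R → Summable fun n => ‖u n‖ * R ^ k n)
    (R : ℝ) (hR : 0 ≤ R) : Summable fun n => ‖u n * k n‖ * R ^ (k n - 1) := by
  refine (hu (2 * (R + 1)) (by positivity)).of_nonneg_of_le (fun n => by positivity) fun n => ?_
  have hk : (k n : ℝ) ≤ 2 ^ k n := by exact_mod_cast (k n).lt_two_pow_self.le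
  have hR' : R ^ (k n - 1) ≤ (R + 1) ^ k n :=
    (pow_le_pow_left₀ hR (by linarith) _).trans (pow_le_pow_right₀ (by linarith) (Nat.sub_le _ _))
  rw [norm_mul, Complex.norm_natCast, mul_pow, mul_assoc]
  gcongr

end PowerSeries

def SolvesAiryEquation (f : ℂ → ℂ) : Prop :=
  Differentiable ℂ f ∧ Differentiable ℂ (deriv f) ∧ ∀ z, deriv (deriv f) z = z * f z

lemma SolvesAiryEquation.linear_comb {f g : ℂ → ℂ} (hf : SolvesAiryEquation f)
    (hg : SolvesAiryEquation g) (a b : ℂ) : SolvesAiryEquation fun z => a * f z + b * g z := by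
  obtain ⟨hf, hf', hf''⟩ := hf
  obtain ⟨hg, hg', hg''⟩ := hg
  have deriv_comb {φ ψ : ℂ → ℂ} (hφ : Differentiable ℂ φ) (hψ : Differentiable ℂ ψ) :
      deriv (fun z => a * φ z + b * ψ z) = fun z => a * deriv φ z + b * deriv ψ z :=
    funext fun z => (((hφ z).hasDerivAt.const_mul a).add ((hψ z).hasDerivAt.const_mul b)).deriv
  refine ⟨by fun_prop, by rw [deriv_comb hf hg]; fun_prop, fun z => ?_⟩
  simp only [deriv_comb hf hg, deriv_comb hf' hg', hf'', hg'']
  ring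

section LacunarySeries

open Nat

noncomputable def airySeries (b : ℕ → ℂ) (j : ℕ) (w : ℂ) : ℂ := ∑' n, b n * w ^ (3 * n + j)

variable {b : ℕ → ℂ} {j : ℕ}

lemma norm_le_div_factorial_of_recurrence
    (hb : ∀ n : ℕ, ((3 * n + j + 3) * (3 * n + j + 2) : ℂ) * b (n + 1) = b n) (n : ℕ) :
    ‖b n‖ ≤ ‖b 0‖ / n ! := by
  induction n with
  | zero => simp
  | succ n ih =>
    have hstep : ‖b (n + 1)‖ * ((3 * n + j + 3) * (3 * n + j + 2)) = ‖b n‖ := by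
      rw [← hb n, norm_mul, mul_comm]
      norm_cast
    have hgrowth : (n + 1 : ℝ) ≤ (3 * n + j + 3) * (3 * n + j + 2) := by nlinarith
    rw [factorial_succ, cast_mul, mul_comm, ← div_div, le_div_iff₀ (by positivity)]
    push_cast
    calc ‖b (n + 1)‖ * (n + 1)
        ≤ ‖b (n + 1)‖ * ((3 * n + j + 3) * (3 * n + j + 2)) := by gcongr
      _ ≤ ‖b 0‖ / n ! := hstep ▸ ih

lemma summable_norm_mul_pow_of_recurrence
    (hb : ∀ n : ℕ, ((3 * n + j + 3) * (3 * n + j + 2) : ℂ) * b (n + 1) = b n) (R : ℝ)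
    (hR : 0 ≤ R) : Summable fun n => ‖b n‖ * R ^ (3 * n + j) := by
  refine ((Real.summable_pow_div_factorial (R ^ 3)).mul_left (‖b 0‖ * R ^ j)).of_nonneg_of_le
    (fun n => by positivity) fun n => ?_
  calc ‖b n‖ * R ^ (3 * n + j) ≤ ‖b 0‖ / n ! * R ^ (3 * n + j) := by
        gcongr; exact norm_le_div_factorial_of_recurrence hb n
    _ = ‖b 0‖ * R ^ j * ((R ^ 3) ^ n / n !) := by ring

lemma tsum_second_deriv_terms_eq_mul_airySeries
    (hb : ∀ n : ℕ, ((3 * n + j + 3) * (3 * n + j + 2) : ℂ) * b (n + 1) = b n) (hj : j ≤ 1)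
    (w : ℂ) :
    ∑' n, b n * (3 * n + j : ℕ) * (3 * n + j - 1 : ℕ) * w ^ (3 * n + j - 1 - 1) =
      w * airySeries b j w := by
  have hshift (n : ℕ) : b (n + 1) * (3 * (n + 1) + j : ℕ) * (3 * (n + 1) + j - 1 : ℕ) *
      w ^ (3 * (n + 1) + j - 1 - 1) = w * (b n * w ^ (3 * n + j)) := by
    rw [show 3 * (n + 1) + j - 1 - 1 = 3 * n + j + 1 by omega,
      show 3 * (n + 1) + j - 1 = 3 * n + j + 2 by omega, ← hb n]
    push_cast
    ring
  have hsummable : Summable fun n => b n * w ^ (3 * n + j) :=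
    .of_norm_bounded (summable_norm_mul_pow_of_recurrence hb ‖w‖ (norm_nonneg w))
      (norm_mul_pow_le_of_norm_le le_rfl)
  rw [tsum_eq_zero_add' (by simpa only [hshift] using hsummable.mul_left w)]
  simp only [hshift, airySeries, tsum_mul_left]
  -- the `n = 0` term carries the factor `j * (j - 1)`, which vanishes for `j ≤ 1`
  obtain rfl | rfl : j = 0 ∨ j = 1 := by omega
  all_goals simp

lemma solvesAiryEquation_airySeries
    (hb : ∀ n : ℕ, ((3 * n + j + 3) * (3 * n + j + 2) : ℂ) * b (n + 1) = b n) (hj : j ≤ 1) :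
    SolvesAiryEquation (airySeries b j) := by
  have hu := summable_norm_mul_pow_of_recurrence hb
  have hu' := summable_norm_mul_natCast_mul_pow hu
  have hderiv : deriv (airySeries b j) =
      fun w => ∑' n, b n * (3 * n + j : ℕ) * w ^ (3 * n + j - 1) :=
    deriv_tsum_mul_pow hu
  refine ⟨differentiable_tsum_mul_pow hu, hderiv ▸ differentiable_tsum_mul_pow hu', fun z => ?_⟩
  rw [hderiv, deriv_tsum_mul_pow hu']
  exact tsum_second_deriv_terms_eq_mul_airySeries hb hj z

end LacunarySeries

section AiryCoefficients

open Nat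

noncomputable def airyCoeff (c : ℂ) (n : ℕ) : ℂ :=
  ((9 : ℂ) ^ n * (n ! : ℂ) * Gamma ((n : ℂ) + c))⁻¹

lemma airyCoeff_succ {c : ℂ} (hc : 0 < c.re) (n : ℕ) :
    9 * (n + 1) * (n + c) * airyCoeff c (n + 1) = airyCoeff c n := by
  have hnc : (n : ℂ) + c ≠ 0 := fun h => by
    have := congrArg re h
    simp only [add_re, natCast_re, zero_re] at this
    linarith [(n.cast_nonneg : (0 : ℝ) ≤ n)]
  have hX : (9 * (n + 1) * (n + c) : ℂ) ≠ 0 := mul_ne_zero (by norm_cast) hnc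
  have hdenom : (9 : ℂ) ^ (n + 1) * ((n + 1) ! : ℂ) * Gamma (((n + 1 : ℕ) : ℂ) + c) =
      (9 * (n + 1) * (n + c)) * ((9 : ℂ) ^ n * (n ! : ℂ) * Gamma ((n : ℂ) + c)) := by
    rw [Nat.factorial_succ, show ((n + 1 : ℕ) : ℂ) + c = (n + c) + 1 by push_cast; ring,
      Gamma_add_one _ hnc]
    push_cast
    ring
  rw [airyCoeff, hdenom, mul_inv, ← mul_assoc, mul_inv_cancel₀ hX, one_mul, airyCoeff]

lemma solvesAiryEquation_airySeries_two_thirds :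
    SolvesAiryEquation (airySeries (airyCoeff (2 / 3)) 0) :=
  solvesAiryEquation_airySeries (fun n => by
    rw [← airyCoeff_succ (by norm_num) n]
    push_cast
    ring) (by norm_num)

lemma solvesAiryEquation_airySeries_four_thirds :
    SolvesAiryEquation (airySeries (airyCoeff (4 / 3)) 1) :=
  solvesAiryEquation_airySeries (fun n => by
    rw [← airyCoeff_succ (by norm_num) n]
    push_cast
    ring) (by norm_num)

end AiryCoefficients

lemma Ai_eq_linear_comb :
    Ai = fun z => (3 : ℂ) ^ (-(2 : ℂ) / 3) * airySeries (airyCoeff (2 / 3)) 0 z +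
      -(3 : ℂ) ^ (-(4 : ℂ) / 3) * airySeries (airyCoeff (4 / 3)) 1 z := by
  funext z
  simp only [Ai, airySeries, airyCoeff, div_eq_inv_mul, add_zero]
  ring

lemma Bi_eq_linear_comb :
    Bi = fun z => (3 : ℂ) ^ (-(1 : ℂ) / 6) * airySeries (airyCoeff (2 / 3)) 0 z +
      (3 : ℂ) ^ (-(5 : ℂ) / 6) * airySeries (airyCoeff (4 / 3)) 1 z := by
  funext z
  simp only [Bi, airySeries, airyCoeff, div_eq_inv_mul, add_zero]

/-- `Ai` and `Bi` are entire and satisfy the Airy differential equation `y'' = z y`. -/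
theorem airy_entire_and_ode :
    (Differentiable ℂ Ai ∧ Differentiable ℂ (deriv Ai) ∧
      ∀ z : ℂ, deriv (deriv Ai) z = z * Ai z) ∧
    (Differentiable ℂ Bi ∧ Differentiable ℂ (deriv Bi) ∧
      ∀ z : ℂ, deriv (deriv Bi) z = z * Bi z) := by
  have h₀ := solvesAiryEquation_airySeries_two_thirds
  have h₁ := solvesAiryEquation_airySeries_four_thirds
  rw [Ai_eq_linear_comb, Bi_eq_linear_comb]
  exact ⟨h₀.linear_comb h₁ _ _, h₀.linear_comb h₁ _ _⟩
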